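/- If a nonnegative differentiable function V : [0,∞) → ℝ satisfies V̇ ≤ -2κ₁V - α V^{1/2} with κ₁ > 0 and α > 0, then V reaches zero in finite time t_r satisfying t_r ≤ (1/κ₁)·ln((2κ₁ V(0)^{1/2} + α)/α). -/

import Mathlib

theorem stmt_3 (V : ℝ → ℝ) (κ₁ α : ℝ) (hκ : 0 < κ₁) (hα : 0 < α)
    (hV : Differentiable ℝ V) (hVnn : ∀ t, 0 ≤ t → 0 ≤ V t)
    (hode : ∀ t, 0 ≤ t → deriv V t ≤ -2 * κ₁ * V t - α * (V t) ^ ((1:ℝ)/2)) :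
    ∃ tr : ℝ, 0 ≤ tr ∧
      tr ≤ (1/κ₁) * Real.log ((2 * κ₁ * (V 0) ^ ((1:ℝ)/2) + α) / α) ∧
      V tr = 0 := by
  have hsq : ∀ x : ℝ, x ^ ((1:ℝ)/2) = Real.sqrt x := fun x => (Real.sqrt_eq_rpow x).symm
  set W0 := Real.sqrt (V 0) with hW0
  have hW0nn : 0 ≤ W0 := Real.sqrt_nonneg _
  set R : ℝ := (2 * κ₁ * W0 + α) / α with hR
  set T : ℝ := (1/κ₁) * Real.log R with hT
  have hR1 : 1 ≤ R := by
    rw [hR, le_div_iff₀ hα]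
    nlinarith
  have hRpos : 0 < R := lt_of_lt_of_le one_pos hR1
  have hT0 : 0 ≤ T := by
    apply mul_nonneg (by positivity)
    exact Real.log_nonneg hR1
  have hTgoal : T = (1/κ₁) * Real.log ((2 * κ₁ * (V 0) ^ ((1:ℝ)/2) + α) / α) := by
    rw [hsq]
  by_contra hcon
  push_neg at hcon
  -- V is positive on [0, T]
  have hpos : ∀ t ∈ Set.Icc (0:ℝ) T, 0 < V t := by
    intro t ht
    rcases lt_or_eq_of_le (hVnn t ht.1) with h | h
    · exact h
    · exact absurd h.symm (hcon t ht.1 (hTgoal ▸ ht.2))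
  set h : ℝ → ℝ := fun t => Real.exp (κ₁*t) * Real.sqrt (V t) + (α/(2*κ₁)) * Real.exp (κ₁*t) with hh
  have hcont : ContinuousOn h (Set.Icc 0 T) := by
    apply Continuous.continuousOn
    have hVc := hV.continuous
    fun_prop
  have hderiv : ∀ t ∈ Set.Ioo (0:ℝ) T,
      HasDerivAt h (κ₁ * Real.exp (κ₁*t) * Real.sqrt (V t)
        + Real.exp (κ₁*t) * (deriv V t / (2 * Real.sqrt (V t)))
        + (α/(2*κ₁)) * (κ₁ * Real.exp (κ₁*t))) t := by
    intro t ht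
    have hVt : V t ≠ 0 := (hpos t ⟨le_of_lt ht.1, le_of_lt ht.2⟩).ne'
    have he : HasDerivAt (fun t => Real.exp (κ₁*t)) (κ₁ * Real.exp (κ₁*t)) t := by
      have h1 : HasDerivAt (fun t : ℝ => κ₁ * t) κ₁ t := by
        simpa using (hasDerivAt_id t).const_mul κ₁
      simpa [mul_comm] using h1.exp
    have hs : HasDerivAt (fun t => Real.sqrt (V t)) (deriv V t / (2 * Real.sqrt (V t))) t := by
      have := (Real.hasDerivAt_sqrt hVt).comp t (hV t).hasDerivAt
      simpa [div_eq_mul_inv, mul_comm, Function.comp_def] using this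
    have := (he.mul hs).add (he.const_mul (α/(2*κ₁)))
    convert this using 1
    all_goals rfl
  have hderivle : ∀ t ∈ interior (Set.Icc (0:ℝ) T), deriv h t ≤ 0 := by
    intro t ht
    rw [interior_Icc] at ht
    have hd := hderiv t ht
    rw [hd.deriv]
    have hVt : 0 < V t := hpos t ⟨le_of_lt ht.1, le_of_lt ht.2⟩
    have hst : 0 < Real.sqrt (V t) := Real.sqrt_pos.mpr hVt
    have hV' : deriv V t ≤ -2 * κ₁ * V t - α * Real.sqrt (V t) := by
      have := hode t (le_of_lt ht.1)
      rwa [hsq] at this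
    have hsq2 : Real.sqrt (V t) * Real.sqrt (V t) = V t := Real.mul_self_sqrt (le_of_lt hVt)
    have hexp : 0 < Real.exp (κ₁*t) := Real.exp_pos _
    have key : deriv V t / (2 * Real.sqrt (V t)) ≤ -κ₁ * Real.sqrt (V t) - α/2 := by
      rw [div_le_iff₀ (by positivity)]
      nlinarith
    have : κ₁ * Real.exp (κ₁*t) * Real.sqrt (V t)
        + Real.exp (κ₁*t) * (deriv V t / (2 * Real.sqrt (V t)))
        + (α/(2*κ₁)) * (κ₁ * Real.exp (κ₁*t))
        ≤ κ₁ * Real.exp (κ₁*t) * Real.sqrt (V t)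
        + Real.exp (κ₁*t) * (-κ₁ * Real.sqrt (V t) - α/2)
        + (α/(2*κ₁)) * (κ₁ * Real.exp (κ₁*t)) := by
      have := mul_le_mul_of_nonneg_left key (le_of_lt hexp)
      linarith
    have heq : κ₁ * Real.exp (κ₁*t) * Real.sqrt (V t)
        + Real.exp (κ₁*t) * (-κ₁ * Real.sqrt (V t) - α/2)
        + (α/(2*κ₁)) * (κ₁ * Real.exp (κ₁*t)) = 0 := by
      field_simp
      ring
    linarith
  have hdiff : DifferentiableOn ℝ h (interior (Set.Icc (0:ℝ) T)) := by
    intro t ht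
    rw [interior_Icc] at ht
    exact ((hderiv t ht).differentiableAt).differentiableWithinAt
  have hanti : AntitoneOn h (Set.Icc 0 T) :=
    antitoneOn_of_deriv_nonpos (convex_Icc 0 T) hcont hdiff hderivle
  have hle : h T ≤ h 0 := hanti (Set.left_mem_Icc.mpr hT0) (Set.right_mem_Icc.mpr hT0) hT0
  have hexpT : Real.exp (κ₁ * T) = R := by
    rw [hT]
    rw [show κ₁ * ((1/κ₁) * Real.log R) = Real.log R by field_simp]
    exact Real.exp_log hRpos
  have hh0 : h 0 = W0 + α/(2*κ₁) := by
    simp [hh, hW0]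
  have hhT : h T = R * Real.sqrt (V T) + (α/(2*κ₁)) * R := by
    simp [hh, hexpT]
  have hRalpha : (α/(2*κ₁)) * R = W0 + α/(2*κ₁) := by
    rw [hR]; field_simp
  have hVT : 0 < Real.sqrt (V T) :=
    Real.sqrt_pos.mpr (hpos T ⟨hT0, le_refl T⟩)
  rw [hhT, hh0, ← hRalpha] at hle
  have hfin : R * Real.sqrt (V T) ≤ 0 := by linarith
  exact absurd hfin (not_le.mpr (mul_pos hRpos hVT))
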